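/- There exists an MDP M = (L, μ0, Σ, δ) and a strategy α such that M with strategy α is weakly synchronizing, but for every memoryless strategy β, M with strategy β is not weakly synchronizing. (Hence memoryless strategies are not sufficient for weakly synchronizing objectives in MDPs.) -/
import Mathlib


open Filter

namespace SyncMDP

/-- A history: an initial state followed by a list of (action, state) steps. -/
structure Hist (L A : Type) where
  start : L
  steps : List (A × L)
deriving DecidableEq

variable {L A : Type}

/-- The last state of a history. -/
def Hist.last (h : Hist L A) : L := h.steps.foldl (fun _ p => p.2) h.start

/-- The length of a history. -/
def Hist.len (h : Hist L A) : ℕ := h.steps.length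

/-- Extending a history by one action and one state. -/
def Hist.extend (h : Hist L A) (a : A) (l : L) : Hist L A := ⟨h.start, h.steps ++ [(a, l)]⟩

/-- A probability distribution on a finite type. -/
def IsDist {S : Type} [Fintype S] (d : S → ℝ) : Prop :=
  (∀ s, 0 ≤ d s) ∧ ∑ s, d s = 1

/-- A probabilistic transition function. -/
def IsTrans [Fintype L] (δ : L → A → L → ℝ) : Prop := ∀ l a, IsDist (δ l a)

/-- A (randomized) strategy assigns a distribution over actions to every history. -/
def IsStrategy [Fintype A] (α : Hist L A → A → ℝ) : Prop :=
  ∀ h : Hist L A, (∀ a, 0 ≤ α h a) ∧ ∑ a, α h a = 1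

/-- A pure strategy plays one action with probability one after every history. -/
def PureStrat (α : Hist L A → A → ℝ) : Prop := ∀ h, ∃ a, α h a = 1

/-- A blind strategy only depends on the length of the history. -/
def BlindStrat (α : Hist L A → A → ℝ) : Prop :=
  ∀ h₁ h₂ : Hist L A, h₁.len = h₂.len → α h₁ = α h₂

/-- A memoryless strategy only depends on the last state of the history. -/
def Memoryless (α : Hist L A → A → ℝ) : Prop :=
  ∀ h₁ h₂ : Hist L A, h₁.last = h₂.last → α h₁ = α h₂

/-- Auxiliary product for the probability of a history: the first argument is the current
state, the second the history (prefix) read so far, the third the remaining steps. -/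
def prAux (δ : L → A → L → ℝ) (α : Hist L A → A → ℝ) : L → Hist L A → List (A × L) → ℝ
  | _, _, [] => 1
  | cur, pre, (a, l) :: rest => α pre a * δ cur a l * prAux δ α l (pre.extend a l) rest

/-- The probability `Pr^α(h)` of a history `h`. -/
def pr (μ0 : L → ℝ) (δ : L → A → L → ℝ) (α : Hist L A → A → ℝ) (h : Hist L A) : ℝ :=
  μ0 h.start * prAux δ α h.start ⟨h.start, []⟩ h.steps

variable (L A) in
/-- The finite set of all histories of length `n`. -/
def hists [Fintype L] [DecidableEq L] [Fintype A] [DecidableEq A] : ℕ → Finset (Hist L A)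
  | 0 => Finset.univ.image fun l : L => ⟨l, []⟩
  | n + 1 => (hists n).biUnion fun h => Finset.univ.image fun p : A × L => h.extend p.1 p.2

variable [Fintype L] [DecidableEq L] [Fintype A] [DecidableEq A]

/-- The outcome `X_n^α` : the distribution over states at step `n` under strategy `α`. -/
noncomputable def outcome (μ0 : L → ℝ) (δ : L → A → L → ℝ) (α : Hist L A → A → ℝ)
    (n : ℕ) (l : L) : ℝ :=
  ∑ h ∈ (hists L A n).filter (fun h => h.last = l), pr μ0 δ α h

/-- The norm `‖X‖ = max_{ℓ ∈ L} X(ℓ)` of a distribution on a (nonempty) finite type. -/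
noncomputable def dnorm (X : L → ℝ) : ℝ := ⨆ l, X l

/-- Strongly synchronizing: `liminf_n ‖X_n^α‖ = 1`. -/
def StronglySync (μ0 : L → ℝ) (δ : L → A → L → ℝ) (α : Hist L A → A → ℝ) : Prop :=
  liminf (fun n => dnorm (outcome μ0 δ α n)) atTop = 1

/-- Weakly synchronizing: `limsup_n ‖X_n^α‖ = 1`. -/
def WeaklySync (μ0 : L → ℝ) (δ : L → A → L → ℝ) (α : Hist L A → A → ℝ) : Prop :=
  limsup (fun n => dnorm (outcome μ0 δ α n)) atTop = 1

open Classical in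
/-- `Post_σ(ℓ)`: the support of `δ(ℓ,σ)`. -/
noncomputable def post (δ : L → A → L → ℝ) (l : L) (a : A) : Finset L :=
  Finset.univ.filter fun l' => 0 < δ l a l'

/-- Transition function of the perfect-information subset construction. -/
noncomputable def deltaP (δ : L → A → L → ℝ) (s : Finset L) (f : L → A) : Finset L :=
  s.biUnion fun l => post δ l (f l)

/-- Transition function of the blind subset construction. -/
noncomputable def deltaB (δ : L → A → L → ℝ) (s : Finset L) (a : A) : Finset L :=
  s.biUnion fun l => post δ l a

open Classical in
/-- The initial cell: the support of `μ0`. -/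
noncomputable def initCell (μ0 : L → ℝ) : Finset L :=
  Finset.univ.filter fun l => 0 < μ0 l

/-- Reachability of a cell from the initial cell in the perfect-information
subset construction. -/
def ReachP (μ0 : L → ℝ) (δ : L → A → L → ℝ) (s : Finset L) : Prop :=
  Relation.ReflTransGen (fun t t' => ∃ f : L → A, deltaP δ t f = t') (initCell μ0) s

/-- Reachability of a cell from the initial cell in the blind subset construction. -/
def ReachB (μ0 : L → ℝ) (δ : L → A → L → ℝ) (s : Finset L) : Prop :=
  Relation.ReflTransGen (fun t t' => ∃ a : A, deltaB δ t a = t') (initCell μ0) s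

/-- Cyclic successor on `Fin d`. -/
def cyc {d : ℕ} (hd : 0 < d) (i : Fin d) : Fin d := ⟨((i : ℕ) + 1) % d, Nat.mod_lt _ hd⟩

/-- A recurrent cyclic set for the cycle `(s, act)` of length `d` of the
perfect-information subset construction. -/
def IsRCSP {d : ℕ} (hd : 0 < d) (δ : L → A → L → ℝ) (s : Fin d → Finset L)
    (act : Fin d → L → A) (g : Fin d → Finset L) : Prop :=
  ∀ i : Fin d, (g i).Nonempty ∧ g i ⊆ s i ∧
    (g i).biUnion (fun l => post δ l (act i l)) = g (cyc hd i)

/-- A minimal recurrent cyclic set (perfect-information). -/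
def IsMinRCSP {d : ℕ} (hd : 0 < d) (δ : L → A → L → ℝ) (s : Fin d → Finset L)
    (act : Fin d → L → A) (g : Fin d → Finset L) : Prop :=
  IsRCSP hd δ s act g ∧
    ∀ g' : Fin d → Finset L, IsRCSP hd δ s act g' → (∀ i, g' i ⊆ g i) → g' = g

/-- A recurrent cyclic set for the cycle `(s, act)` of length `d` of the blind
subset construction. -/
def IsRCSB {d : ℕ} (hd : 0 < d) (δ : L → A → L → ℝ) (s : Fin d → Finset L)
    (act : Fin d → A) (g : Fin d → Finset L) : Prop :=
  ∀ i : Fin d, (g i).Nonempty ∧ g i ⊆ s i ∧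
    (g i).biUnion (fun l => post δ l (act i)) = g (cyc hd i)

/-- A minimal recurrent cyclic set (blind). -/
def IsMinRCSB {d : ℕ} (hd : 0 < d) (δ : L → A → L → ℝ) (s : Fin d → Finset L)
    (act : Fin d → A) (g : Fin d → Finset L) : Prop :=
  IsRCSB hd δ s act g ∧
    ∀ g' : Fin d → Finset L, IsRCSB hd δ s act g' → (∀ i, g' i ⊆ g i) → g' = g



/-! ### Auxiliary machinery -/

section Machinery

variable {L A : Type}

lemma Hist.last_extend (h : Hist L A) (a : A) (l : L) : (h.extend a l).last = l := by
  simp [Hist.extend, Hist.last]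

lemma extend_inj {h₁ h₂ : Hist L A} {a₁ a₂ : A} {l₁ l₂ : L}
    (he : h₁.extend a₁ l₁ = h₂.extend a₂ l₂) : h₁ = h₂ ∧ a₁ = a₂ ∧ l₁ = l₂ := by
  cases h₁ with | mk s₁ st₁ =>
  cases h₂ with | mk s₂ st₂ =>
  simp only [Hist.extend, Hist.mk.injEq] at he
  obtain ⟨h1, h2⟩ := he
  obtain ⟨h3, h4⟩ := List.append_inj' h2 rfl
  simp_all

lemma prAux_concat (δ : L → A → L → ℝ) (α : Hist L A → A → ℝ) :
    ∀ (steps : List (A × L)) (cur : L) (pre : Hist L A) (a : A) (l : L),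
      prAux δ α cur pre (steps ++ [(a, l)]) =
        prAux δ α cur pre steps *
          (α ⟨pre.start, pre.steps ++ steps⟩ a * δ (steps.foldl (fun _ p => p.2) cur) a l)
  | [], cur, pre, a, l => by simp [prAux]
  | (b, m) :: rest, cur, pre, a, l => by
      have ih := prAux_concat δ α rest m (pre.extend b m) a l
      simp only [Hist.extend, List.append_assoc, List.singleton_append,
        List.cons_append, List.nil_append, List.foldl_cons, List.append_eq, prAux] at ih ⊢
      rw [ih]
      ring

lemma pr_extend (μ0 : L → ℝ) (δ : L → A → L → ℝ) (α : Hist L A → A → ℝ)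
    (h : Hist L A) (a : A) (l : L) :
    pr μ0 δ α (h.extend a l) = pr μ0 δ α h * (α h a * δ h.last a l) := by
  cases h with | mk s st =>
  simp only [pr, Hist.extend, prAux_concat, Hist.last, List.nil_append]
  ring

variable [Fintype L] [DecidableEq L] [Fintype A] [DecidableEq A]

lemma len_of_mem_hists : ∀ {n : ℕ} {h : Hist L A}, h ∈ hists L A n → h.len = n := by
  intro n
  induction n with
  | zero =>
    intro h hm
    simp only [hists, Finset.mem_image] at hm
    obtain ⟨l, -, rfl⟩ := hm
    rfl
  | succ n ih =>
    intro h hm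
    simp only [hists, Finset.mem_biUnion, Finset.mem_image] at hm
    obtain ⟨h', hm', p, -, rfl⟩ := hm
    simp [Hist.extend, Hist.len] at ih ⊢
    simpa [Hist.len] using ih hm'

lemma outcome_zero (μ0 : L → ℝ) (δ : L → A → L → ℝ) (α : Hist L A → A → ℝ) (l : L) :
    outcome μ0 δ α 0 l = μ0 l := by
  classical
  rw [outcome, Finset.sum_filter, hists,
    Finset.sum_image (by intro x _ y _ hxy; simpa using hxy)]
  have hlast : ∀ l' : L, (Hist.mk l' ([] : List (A × L))).last = l' := fun _ => rfl
  simp only [hlast, pr, prAux, mul_one]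
  rw [Finset.sum_ite_eq' Finset.univ l μ0]
  simp

lemma hists_succ_sum (n : ℕ) (F : Hist L A → ℝ) :
    ∑ h ∈ hists L A (n + 1), F h
      = ∑ h ∈ hists L A n, ∑ a : A, ∑ l : L, F (h.extend a l) := by
  show ∑ h ∈ (hists L A n).biUnion _, F h = _
  rw [Finset.sum_biUnion ?disj]
  · refine Finset.sum_congr rfl fun h _ => ?_
    rw [Finset.sum_image ?inj, Fintype.sum_prod_type]
    intro p _ q _ hpq
    obtain ⟨-, h1, h2⟩ := extend_inj hpq
    exact Prod.ext h1 h2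
  case disj =>
    intro h₁ _ h₂ _ hne
    simp only [Function.onFun, Finset.disjoint_left, Finset.mem_image]
    rintro x ⟨p, -, rfl⟩ ⟨q, -, he⟩
    exact hne (extend_inj he).1.symm

lemma outcome_succ (μ0 : L → ℝ) (δ : L → A → L → ℝ) (α : Hist L A → A → ℝ)
    (n : ℕ) (l' : L) :
    outcome μ0 δ α (n + 1) l'
      = ∑ h ∈ hists L A n, pr μ0 δ α h * ∑ a : A, α h a * δ h.last a l' := by
  classical
  rw [outcome, Finset.sum_filter, hists_succ_sum]
  refine Finset.sum_congr rfl fun h _ => ?_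
  rw [Finset.mul_sum]
  refine Finset.sum_congr rfl fun a _ => ?_
  simp only [Hist.last_extend, pr_extend]
  rw [Finset.sum_ite_eq' Finset.univ l' fun l => pr μ0 δ α h * (α h a * δ h.last a l)]
  simp

lemma outcome_markov (μ0 : L → ℝ) (δ : L → A → L → ℝ) (α : Hist L A → A → ℝ)
    (step : ℕ → L → A → ℝ)
    (hα : ∀ h : Hist L A, ∀ a, α h a = step h.len h.last a) (n : ℕ) (l' : L) :
    outcome μ0 δ α (n + 1) l'
      = ∑ l : L, outcome μ0 δ α n l * ∑ a : A, step n l a * δ l a l' := by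
  classical
  rw [outcome_succ]
  rw [Finset.sum_congr rfl (fun h hm => by
    rw [show (∑ a : A, α h a * δ h.last a l')
        = ∑ a : A, step n h.last a * δ h.last a l' from
      Finset.sum_congr rfl fun a _ => by rw [hα, len_of_mem_hists hm]])]
  rw [← Finset.sum_fiberwise (hists L A n) Hist.last
    (fun h => pr μ0 δ α h * ∑ a : A, step n h.last a * δ h.last a l')]
  refine Finset.sum_congr rfl fun l _ => ?_
  rw [outcome, Finset.sum_mul]
  refine Finset.sum_congr rfl fun h hm => ?_
  rw [(Finset.mem_filter.mp hm).2]

lemma le_dnorm (X : L → ℝ) [Nonempty L] (l : L) : X l ≤ dnorm X :=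
  le_ciSup (Set.Finite.bddAbove (Set.finite_range X)) l

lemma dnorm_le (X : L → ℝ) [Nonempty L] {b : ℝ} (h : ∀ l, X l ≤ b) : dnorm X ≤ b :=
  ciSup_le h

end Machinery

/-! ### The concrete MDP -/

/-- States: 0 = waiting state `C`, 1 and 2 form a deterministic 2-cycle.
Actions: from state 0, action 0 moves to state 1 w.p. 1/2 (staying w.p. 1/2),
action 1 moves to state 2 w.p. 1/2.  States 1 and 2 ignore the action. -/
noncomputable def del : Fin 3 → Fin 2 → Fin 3 → ℝ := fun l a l' =>
  if l = 0 then
    (if l' = 0 then 1/2 else if (a = 0 ∧ l' = 1) ∨ (a = 1 ∧ l' = 2) then 1/2 else 0)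
  else if l = 1 then (if l' = 2 then 1 else 0)
  else (if l' = 1 then 1 else 0)

noncomputable def mu : Fin 3 → ℝ := fun l => if l = 0 then 1 else 0

/-- The synchronizing (blind) strategy: play action `n % 2` at step `n`. -/
noncomputable def astrat : Hist (Fin 3) (Fin 2) → Fin 2 → ℝ :=
  fun h a => if (a : ℕ) = h.len % 2 then 1 else 0

/-- Closed form for the outcome of `astrat`. -/
noncomputable def XP (n : ℕ) : Fin 3 → ℝ := fun l =>
  if l = 0 then (2 : ℝ)⁻¹ ^ n
  else if l = 1 then (if n % 2 = 1 then 1 - (2 : ℝ)⁻¹ ^ n else 0)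
  else (if n % 2 = 0 then 1 - (2 : ℝ)⁻¹ ^ n else 0)

lemma outcome_astrat (n : ℕ) : outcome mu del astrat n = XP n := by
  induction n with
  | zero =>
    funext l
    rw [outcome_zero]
    fin_cases l <;> simp [mu, XP]
  | succ n ih =>
    funext l'
    rw [outcome_markov mu del astrat
      (fun n _ a => if (a : ℕ) = n % 2 then 1 else 0) (fun h a => rfl), ih]
    rcases Nat.mod_two_eq_zero_or_one n with hn | hn
    · have hn1 : (n + 1) % 2 = 1 := by omega
      fin_cases l' <;>
        · rw [Fin.sum_univ_three, Fin.sum_univ_two, Fin.sum_univ_two, Fin.sum_univ_two]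
          simp [XP, del, hn, hn1, Fin.ext_iff]
          try ring
    · have hn1 : (n + 1) % 2 = 0 := by omega
      fin_cases l' <;>
        · rw [Fin.sum_univ_three, Fin.sum_univ_two, Fin.sum_univ_two, Fin.sum_univ_two]
          simp [XP, del, hn, hn1, Fin.ext_iff]
          try ring

/-- There is an MDP (with finite state space `Fin n` and finite action
alphabet `Fin m`) and a strategy `α` that is weakly synchronizing, while no memoryless
strategy is weakly synchronizing. -/
theorem memoryless_insufficient_weakly :
    ∃ (n m : ℕ) (μ0 : Fin n → ℝ) (δ : Fin n → Fin m → Fin n → ℝ),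
      IsDist μ0 ∧ IsTrans δ ∧
      (∃ α : Hist (Fin n) (Fin m) → Fin m → ℝ, IsStrategy α ∧ WeaklySync μ0 δ α) ∧
      (∀ β : Hist (Fin n) (Fin m) → Fin m → ℝ,
        IsStrategy β → Memoryless β → ¬ WeaklySync μ0 δ β) := by
  refine ⟨3, 2, mu, del, ⟨?_, ?_⟩, ?_, ⟨astrat, ?_, ?_⟩, ?_⟩
  · intro l; unfold mu; split <;> norm_num
  · simp [mu, Fin.sum_univ_three]
  · -- IsTrans del
    intro l a
    constructor
    · intro l'
      fin_cases l <;> fin_cases a <;> fin_cases l' <;> norm_num [del, Fin.ext_iff]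
    · fin_cases l <;> fin_cases a <;>
        · rw [Fin.sum_univ_three]
          norm_num [del, Fin.ext_iff]
  · -- IsStrategy astrat
    intro h
    constructor
    · intro a; unfold astrat; split <;> norm_num
    · rw [Fin.sum_univ_two]
      rcases Nat.mod_two_eq_zero_or_one h.len with hp | hp <;> simp [astrat, hp]
  · -- astrat is weakly synchronizing
    rw [WeaklySync]
    apply Filter.Tendsto.limsup_eq
    have h2 : Tendsto (fun n : ℕ => (2:ℝ)⁻¹ ^ n) atTop (nhds 0) :=
      tendsto_pow_atTop_nhds_zero_of_lt_one (by norm_num) (by norm_num)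
    have hlow : Tendsto (fun n : ℕ => 1 - (2:ℝ)⁻¹ ^ n) atTop (nhds 1) := by
      simpa using tendsto_const_nhds.sub h2
    refine tendsto_of_tendsto_of_tendsto_of_le_of_le hlow tendsto_const_nhds ?_ ?_
    · intro n
      dsimp only
      rw [outcome_astrat]
      rcases Nat.mod_two_eq_zero_or_one n with hp | hp
      · have : XP n 2 = 1 - (2:ℝ)⁻¹ ^ n := by simp [XP, hp]
        calc 1 - (2:ℝ)⁻¹ ^ n = XP n 2 := this.symm
          _ ≤ dnorm (XP n) := le_dnorm (XP n) 2
      · have : XP n 1 = 1 - (2:ℝ)⁻¹ ^ n := by simp [XP, hp]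
        calc 1 - (2:ℝ)⁻¹ ^ n = XP n 1 := this.symm
          _ ≤ dnorm (XP n) := le_dnorm (XP n) 1
    · intro n
      dsimp only
      rw [outcome_astrat]
      refine dnorm_le (XP n) fun l => ?_
      have h1 : (0:ℝ) ≤ (2:ℝ)⁻¹ ^ n := by positivity
      have h2 : (2:ℝ)⁻¹ ^ n ≤ 1 := pow_le_one₀ (by norm_num) (by norm_num)
      unfold XP
      split_ifs <;> linarith
  · -- no memoryless strategy is weakly synchronizing
    intro β hβ hmem hws
    have hstep : ∀ (h : Hist (Fin 3) (Fin 2)) (a : Fin 2),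
        β h a = (fun (_ : ℕ) (l : Fin 3) (a : Fin 2) => β ⟨l, []⟩ a) h.len h.last a := by
      intro h a
      exact congrFun (hmem h ⟨h.last, []⟩ rfl) a
    have hsum : ∀ l : Fin 3, β ⟨l, []⟩ 0 + β ⟨l, []⟩ 1 = 1 := by
      intro l
      have := (hβ ⟨l, []⟩).2
      rwa [Fin.sum_univ_two] at this
    have hpos : ∀ (l : Fin 3) (a : Fin 2), 0 ≤ β ⟨l, []⟩ a := fun l => (hβ ⟨l, []⟩).1
    set p : ℝ := β ⟨0, []⟩ 0 with hpdef
    set q : ℝ := β ⟨0, []⟩ 1 with hqdef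
    have key : ∀ n : ℕ,
        outcome mu del β n 0 = (2:ℝ)⁻¹ ^ n ∧
        outcome mu del β n 1 + outcome mu del β n 2 = 1 - (2:ℝ)⁻¹ ^ n ∧
        outcome mu del β n 1 - outcome mu del β n 2
          = (-1:ℝ) ^ n * (q - p) * (1 - (-1:ℝ) ^ n * (2:ℝ)⁻¹ ^ n) / 3 := by
      intro n
      induction n with
      | zero => norm_num [outcome_zero, mu, Fin.ext_iff]
      | succ n ih =>
        obtain ⟨ih0, ih1, ih2⟩ := ih
        have r0 := outcome_markov mu del β
          (fun (_ : ℕ) (l : Fin 3) (a : Fin 2) => β ⟨l, []⟩ a) hstep n 0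
        have r1 := outcome_markov mu del β
          (fun (_ : ℕ) (l : Fin 3) (a : Fin 2) => β ⟨l, []⟩ a) hstep n 1
        have r2 := outcome_markov mu del β
          (fun (_ : ℕ) (l : Fin 3) (a : Fin 2) => β ⟨l, []⟩ a) hstep n 2
        rw [Fin.sum_univ_three, Fin.sum_univ_two, Fin.sum_univ_two, Fin.sum_univ_two]
          at r0 r1 r2
        simp only [del, Fin.ext_iff] at r0 r1 r2
        norm_num at r0 r1 r2
        have hsq : (-1:ℝ) ^ n * (-1:ℝ) ^ n = 1 := by
          rw [← pow_add]
          exact Even.neg_one_pow ⟨n, rfl⟩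
        refine ⟨?_, ?_, ?_⟩
        · rw [r0]
          linear_combination (outcome mu del β n 0 / 2) * hsum 0 + ((1:ℝ) / 2) * ih0
        · rw [r1, r2]
          linear_combination (outcome mu del β n 0 / 2) * hsum 0 +
            (outcome mu del β n 2) * hsum 2 + (outcome mu del β n 1) * hsum 1 +
            ih1 + ((1:ℝ) / 2) * ih0
        · rw [r1, r2]
          linear_combination (outcome mu del β n 2) * hsum 2 -
            (outcome mu del β n 1) * hsum 1 - ih2 + ((p - q) / 2) * ih0 +
            ((q - p) * (2:ℝ)⁻¹ ^ n / 2) * hsq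
    have hb : ∀ n : ℕ, 1 ≤ n → ∀ l : Fin 3, outcome mu del β n l ≤ 3 / 4 := by
      intro n hn l
      obtain ⟨k0, k1, k2⟩ := key n
      have ht0 : (0:ℝ) ≤ (2:ℝ)⁻¹ ^ n := by positivity
      have ht : (2:ℝ)⁻¹ ^ n ≤ 1 / 2 := by
        calc (2:ℝ)⁻¹ ^ n ≤ (2:ℝ)⁻¹ ^ 1 :=
          pow_le_pow_of_le_one (by norm_num) (by norm_num) hn
        _ = 1 / 2 := by norm_num
      have hqp1 : q - p ≤ 1 := by linarith [hpos 0 0, hpos 0 1, hsum 0]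
      have hqp2 : -1 ≤ q - p := by linarith [hpos 0 0, hpos 0 1, hsum 0]
      rcases Nat.even_or_odd n with he | he
      · rw [Even.neg_one_pow he] at k2
        fin_cases l
        · show outcome mu del β n 0 ≤ 3 / 4
          rw [k0]; linarith
        · show outcome mu del β n 1 ≤ 3 / 4
          nlinarith [mul_nonneg (by linarith : (0:ℝ) ≤ 1 - (q - p))
              (by linarith : (0:ℝ) ≤ 1 - (2:ℝ)⁻¹ ^ n),
            mul_nonneg (by linarith : (0:ℝ) ≤ 1 + (q - p))
              (by linarith : (0:ℝ) ≤ 1 - (2:ℝ)⁻¹ ^ n)]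
        · show outcome mu del β n 2 ≤ 3 / 4
          nlinarith [mul_nonneg (by linarith : (0:ℝ) ≤ 1 - (q - p))
              (by linarith : (0:ℝ) ≤ 1 - (2:ℝ)⁻¹ ^ n),
            mul_nonneg (by linarith : (0:ℝ) ≤ 1 + (q - p))
              (by linarith : (0:ℝ) ≤ 1 - (2:ℝ)⁻¹ ^ n)]
      · rw [Odd.neg_one_pow he] at k2
        fin_cases l
        · show outcome mu del β n 0 ≤ 3 / 4
          rw [k0]; linarith
        · show outcome mu del β n 1 ≤ 3 / 4
          nlinarith [mul_nonneg (by linarith : (0:ℝ) ≤ 1 - (q - p))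
              (by linarith : (0:ℝ) ≤ 1 + (2:ℝ)⁻¹ ^ n),
            mul_nonneg (by linarith : (0:ℝ) ≤ 1 + (q - p))
              (by linarith : (0:ℝ) ≤ 1 + (2:ℝ)⁻¹ ^ n)]
        · show outcome mu del β n 2 ≤ 3 / 4
          nlinarith [mul_nonneg (by linarith : (0:ℝ) ≤ 1 - (q - p))
              (by linarith : (0:ℝ) ≤ 1 + (2:ℝ)⁻¹ ^ n),
            mul_nonneg (by linarith : (0:ℝ) ≤ 1 + (q - p))
              (by linarith : (0:ℝ) ≤ 1 + (2:ℝ)⁻¹ ^ n)]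
    have hub : ∀ᶠ n in atTop, dnorm (outcome mu del β n) ≤ 3 / 4 :=
      eventually_atTop.2 ⟨1, fun n hn => dnorm_le _ (hb n hn)⟩
    have hlb : ∀ᶠ n in atTop, (0:ℝ) ≤ dnorm (outcome mu del β n) := by
      refine Eventually.of_forall fun n => le_trans ?_ (le_dnorm (outcome mu del β n) 0)
      rw [(key n).1]
      positivity
    have hcb := isCoboundedUnder_le_of_eventually_le atTop hlb
    have hle : limsup (fun n => dnorm (outcome mu del β n)) atTop ≤ 3 / 4 :=
      limsup_le_of_le hcb hub
    rw [WeaklySync] at hws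
    rw [hws] at hle
    norm_num at hle

end SyncMDP
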